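/- arXiv:1408.5780 — 5 statements merged into one kernel-verified Lean document; each statement's English description precedes it below -/
import Mathlib

section
/- Consider an a×a grid FR code: symbols are the a² cells of an a×a array, and storage nodes are the a rows and a columns. For any k ≤ a, and any choice of k nodes, the number of symbols covered is αk − st where s nodes are rows and t = k−s are columns; consequently the minimum over all selections of k nodes equals ka − k²/4 if k is even and ka − (k²−1)/4 if k is odd. -/
lemma grid_count (a : ℕ) (R C : Finset (Fin a)) :
    ((Finset.univ.filter (fun p : Fin a × Fin a => p.1 ∈ R ∨ p.2 ∈ C)).card : ℤ)
      = a * R.card + a * C.card - R.card * C.card := by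
  have h1 : Finset.univ.filter (fun p : Fin a × Fin a => ¬(p.1 ∈ R ∨ p.2 ∈ C))
      = Rᶜ ×ˢ Cᶜ := by
    ext p; simp [Finset.mem_product, not_or]
  have h2 := Finset.card_filter_add_card_filter_not
    (s := (Finset.univ : Finset (Fin a × Fin a)))
    (p := fun p : Fin a × Fin a => p.1 ∈ R ∨ p.2 ∈ C)
  rw [h1, Finset.card_product] at h2
  have hR : R.card ≤ a := by simpa using Finset.card_le_univ R
  have hC : C.card ≤ a := by simpa using Finset.card_le_univ C
  have hRc : Rᶜ.card = a - R.card := by simp [Finset.card_compl]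
  have hCc : Cᶜ.card = a - C.card := by simp [Finset.card_compl]
  rw [hRc, hCc] at h2
  have h3 : ((Finset.univ.filter (fun p : Fin a × Fin a => p.1 ∈ R ∨ p.2 ∈ C)).card : ℤ)
      + (a - R.card) * (a - C.card) = a * a := by
    have := congrArg (Nat.cast : ℕ → ℤ) h2
    push_cast [Nat.cast_sub hR, Nat.cast_sub hC] at this
    simpa using this
  linarith

/-- Grid FR code: choosing s rows and t columns with s + t = k ≤ a covers
exactly ak − st symbols, and the minimum coverage over all choices of k
nodes equals ka − k²/4 for even k and ka − (k²−1)/4 for odd k. -/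
theorem grid_fr_code_file_size (a k : ℕ) (ha : 1 ≤ a) (hk1 : 1 ≤ k) (hka : k ≤ a) :
    (∀ R C : Finset (Fin a), R.card + C.card = k →
      (((Finset.univ.filter (fun p : Fin a × Fin a => p.1 ∈ R ∨ p.2 ∈ C)).card : ℤ)
        = a * k - R.card * C.card)) ∧
    IsLeast {m : ℤ | ∃ R C : Finset (Fin a), R.card + C.card = k ∧
        m = ((Finset.univ.filter (fun p : Fin a × Fin a => p.1 ∈ R ∨ p.2 ∈ C)).card : ℤ)}
      (if Even k then (k : ℤ) * a - k ^ 2 / 4 else (k : ℤ) * a - (k ^ 2 - 1) / 4) := by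
  have count : ∀ R C : Finset (Fin a), R.card + C.card = k →
      (((Finset.univ.filter (fun p : Fin a × Fin a => p.1 ∈ R ∨ p.2 ∈ C)).card : ℤ)
        = a * k - R.card * C.card) := by
    intro R C h
    rw [grid_count]
    have : ((R.card : ℤ) + C.card) = k := by exact_mod_cast congrArg (Nat.cast : ℕ → ℤ) h
    rw [← this]; ring
  refine ⟨count, ?_, ?_⟩
  · -- membership: pick s = k/2, t = k - k/2
    set s := k / 2 with hs
    set t := k - k / 2 with ht
    have hst : s + t = k := by omega
    have hsa : s ≤ a := by omega
    have hta : t ≤ a := by omega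
    obtain ⟨R, -, hRcard⟩ := Finset.exists_subset_card_eq
      (show s ≤ (Finset.univ : Finset (Fin a)).card by simpa using hsa)
    obtain ⟨C, -, hCcard⟩ := Finset.exists_subset_card_eq
      (show t ≤ (Finset.univ : Finset (Fin a)).card by simpa using hta)
    refine ⟨R, C, by rw [hRcard, hCcard]; exact hst, ?_⟩
    rw [count R C (by rw [hRcard, hCcard]; exact hst), hRcard, hCcard]
    rcases Nat.even_or_odd k with hk | hk
    · obtain ⟨m, hm⟩ := hk
      have hdiv : ((k : ℤ) ^ 2) / 4 = m * m := by
        have : (k : ℤ) = 2 * m := by exact_mod_cast hm.trans (two_mul m).symm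
        rw [this]; ring_nf
        omega
      have hek : Even k := ⟨m, hm⟩
      rw [if_pos hek, hdiv]
      have : s = m ∧ t = m := by omega
      rw [this.1, this.2]; ring
    · obtain ⟨m, hm⟩ := hk
      have hne : ¬ Even k := by simp [Nat.not_even_iff_odd.mpr ⟨m, hm⟩]
      have hdiv : ((k : ℤ) ^ 2 - 1) / 4 = m * (m + 1) := by
        have : (k : ℤ) = 2 * m + 1 := by exact_mod_cast hm
        rw [this]; ring_nf
        omega
      rw [if_neg hne, hdiv]
      have : s = m ∧ t = m + 1 := by omega
      rw [this.1, this.2]; push_cast; ring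
  · rintro x ⟨R, C, hsum, rfl⟩
    rw [count R C hsum]
    set s := R.card
    set t := C.card
    have hst : (s : ℤ) + t = k := by exact_mod_cast hsum
    rcases Nat.even_or_odd k with hk | hk
    · obtain ⟨m, hm⟩ := hk
      have hkz : (k : ℤ) = 2 * m := by exact_mod_cast hm.trans (two_mul m).symm
      have hdiv : ((k : ℤ) ^ 2) / 4 = m * m := by rw [hkz]; ring_nf; omega
      have hek : Even k := ⟨m, hm⟩
      rw [if_pos hek, hdiv]
      have h4 : (s : ℤ) * t ≤ m * m := by nlinarith [sq_nonneg ((s : ℤ) - t)]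
      linarith
    · obtain ⟨m, hm⟩ := hk
      have hne : ¬ Even k := by simp [Nat.not_even_iff_odd.mpr ⟨m, hm⟩]
      have hkz : (k : ℤ) = 2 * m + 1 := by exact_mod_cast hm
      have hdiv : ((k : ℤ) ^ 2 - 1) / 4 = m * (m + 1) := by rw [hkz]; ring_nf; omega
      rw [if_neg hne, hdiv]
      have h4 : 4 * ((s : ℤ) * t) ≤ 4 * (m * (m + 1)) + 1 := by
        nlinarith [sq_nonneg ((s : ℤ) - t)]
      have h5 : (s : ℤ) * t ≤ m * (m + 1) := by omega
      linarith
end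

section
/- Let N₁ be an m×r 0-1 matrix with column sums α₁ and N₂ a p×s 0-1 matrix with column sums α₂, such that in each matrix, any two distinct columns have inner product at most 1. Then any two distinct columns of the Kronecker product N₁ ⊗ N₂ have inner product at most max(α₁, α₂), and the column sums of N₁ ⊗ N₂ are all α₁α₂. -/
/-- For 0-1 matrices N₁ (m×r, column sums α₁, pairwise column inner
products ≤ 1) and N₂ (p×s, column sums α₂, pairwise column inner products
≤ 1), the Kronecker product has column sums α₁α₂ and pairwise column inner
products at most max(α₁, α₂). -/
theorem kronecker_column_overlap (m r p s α₁ α₂ : ℕ)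
    (N₁ : Fin m → Fin r → ℕ) (N₂ : Fin p → Fin s → ℕ)
    (h01₁ : ∀ i j, N₁ i j = 0 ∨ N₁ i j = 1)
    (h01₂ : ∀ i j, N₂ i j = 0 ∨ N₂ i j = 1)
    (hcol₁ : ∀ j, (∑ i, N₁ i j) = α₁)
    (hcol₂ : ∀ j, (∑ i, N₂ i j) = α₂)
    (hip₁ : ∀ j j', j ≠ j' → (∑ i, N₁ i j * N₁ i j') ≤ 1)
    (hip₂ : ∀ j j', j ≠ j' → (∑ i, N₂ i j * N₂ i j') ≤ 1) :
    (∀ c : Fin r × Fin s,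
      (∑ x : Fin m × Fin p, N₁ x.1 c.1 * N₂ x.2 c.2) = α₁ * α₂) ∧
    (∀ c c' : Fin r × Fin s, c ≠ c' →
      (∑ x : Fin m × Fin p,
          (N₁ x.1 c.1 * N₂ x.2 c.2) * (N₁ x.1 c'.1 * N₂ x.2 c'.2))
        ≤ max α₁ α₂) := by
  have hsq₁ : ∀ j, (∑ i, N₁ i j * N₁ i j) = α₁ := by
    intro j
    rw [← hcol₁ j]
    refine Finset.sum_congr rfl fun i _ => ?_
    rcases h01₁ i j with h | h <;> simp [h]
  have hsq₂ : ∀ j, (∑ i, N₂ i j * N₂ i j) = α₂ := by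
    intro j
    rw [← hcol₂ j]
    refine Finset.sum_congr rfl fun i _ => ?_
    rcases h01₂ i j with h | h <;> simp [h]
  have key : ∀ (c c' : Fin r × Fin s),
      (∑ x : Fin m × Fin p,
          (N₁ x.1 c.1 * N₂ x.2 c.2) * (N₁ x.1 c'.1 * N₂ x.2 c'.2))
        = (∑ i, N₁ i c.1 * N₁ i c'.1) * (∑ i, N₂ i c.2 * N₂ i c'.2) := by
    intro c c'
    rw [Finset.sum_mul_sum, ← Finset.sum_product']
    refine Finset.sum_congr rfl fun x _ => by ring
  constructor
  · intro c
    have := key c c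
    simp only [hsq₁, hsq₂] at this
    calc (∑ x : Fin m × Fin p, N₁ x.1 c.1 * N₂ x.2 c.2)
        = ∑ x : Fin m × Fin p,
            (N₁ x.1 c.1 * N₂ x.2 c.2) * (N₁ x.1 c.1 * N₂ x.2 c.2) := by
          refine Finset.sum_congr rfl fun x _ => ?_
          rcases h01₁ x.1 c.1 with h | h <;> rcases h01₂ x.2 c.2 with h' | h' <;>
            simp [h, h']
      _ = α₁ * α₂ := this
  · intro c c' hne
    rw [key]
    by_cases h1 : c.1 = c'.1
    · have h2 : c.2 ≠ c'.2 := fun h2 => hne (Prod.ext h1 h2)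
      rw [h1, hsq₁]
      calc α₁ * (∑ i, N₂ i c.2 * N₂ i c'.2) ≤ α₁ * 1 :=
            Nat.mul_le_mul_left _ (hip₂ _ _ h2)
        _ ≤ max α₁ α₂ := by simp
    · calc (∑ i, N₁ i c.1 * N₁ i c'.1) * (∑ i, N₂ i c.2 * N₂ i c'.2)
          ≤ 1 * α₂ := by
            refine Nat.mul_le_mul (hip₁ _ _ h1) ?_
            rw [← hcol₂ c.2]
            refine Finset.sum_le_sum fun i _ => ?_
            rcases h01₂ i c'.2 with h | h <;> simp [h]
        _ ≤ max α₁ α₂ := by simp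
end

section
/- Let Γ be a finite s-regular graph (s > 2) with girth g, where edges are symbols and each vertex is a storage node storing its s incident edges. Then for any k ≤ g vertices v₁,…,v_k, the number of distinct edges incident to {v₁,…,v_k} is at least k(s−1). -/
open SimpleGraph Finset

set_option linter.unusedVariables false


lemma my_exists_cycle {V : Type*} [Fintype V] [DecidableEq V] (H : SimpleGraph V)
    [DecidableRel H.Adj]
    (hdeg : ∀ ⦃x y : V⦄, H.Adj x y → 2 ≤ H.degree x) {x0 y0 : V} (h0 : H.Adj x0 y0) :
    ∃ (a : V) (c : H.Walk a a), c.IsCycle := by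
  by_contra hac
  push_neg at hac
  have key : ∀ n : ℕ, ∃ (x r : V) (p : H.Walk x r), p.IsPath ∧ p.length = n + 1 := by
    intro n
    induction n with
    | zero =>
      exact ⟨x0, y0, Walk.cons h0 Walk.nil, Walk.IsPath.nil.cons (by simp [h0.ne]), by simp⟩
    | succ n ih =>
      obtain ⟨x, r, p, hp, hlen⟩ := ih
      cases p with
      | nil => simp at hlen
      | @cons _ w _ hadj q =>
        set P : H.Walk x r := Walk.cons hadj q with hP
        have hxnot : x ∉ P.support.tail := by
          have := hp.support_nodup
          rw [P.support_eq_cons] at this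
          exact (List.nodup_cons.mp this).1
        have hdarts : ∀ y : V, s(x, y) ∈ P.edges → ∃ d ∈ P.darts, d.toProd = (x, y) := by
          intro y hy
          obtain ⟨d, hd, hde⟩ := List.mem_map.mp hy
          rcases (Sym2.mk_eq_mk_iff (p := d.toProd) (q := (x, y))).mp hde with h | h
          · exact ⟨d, hd, h⟩
          · exfalso
            apply hxnot
            rw [← Walk.map_snd_darts]
            refine List.mem_map.mpr ⟨d, hd, ?_⟩
            simpa using congrArg Prod.snd h
        have hBcard : ((H.neighborFinset x).filter (fun y => s(x, y) ∈ P.edges)).card ≤ 1 := by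
          refine Finset.card_le_one.mpr ?_
          intro y1 hy1 y2 hy2
          simp only [Finset.mem_filter, mem_neighborFinset] at hy1 hy2
          obtain ⟨d1, hd1, he1⟩ := hdarts y1 hy1.2
          obtain ⟨d2, hd2, he2⟩ := hdarts y2 hy2.2
          have hnd : (P.darts.map (·.fst)).Nodup := by
            rw [Walk.map_fst_darts]
            exact hp.support_nodup.sublist (List.dropLast_sublist _)
          have hd12 : d1 = d2 := List.inj_on_of_nodup_map hnd hd1 hd2
            (by show d1.toProd.1 = d2.toProd.1; rw [he1, he2])
          have := he1.symm.trans (congrArg Dart.toProd hd12 |>.trans he2)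
          simpa using congrArg Prod.snd this
        have hdx : 2 ≤ (H.neighborFinset x).card := by
          rw [card_neighborFinset_eq_degree]
          exact hdeg hadj
        have : 1 ≤ ((H.neighborFinset x) \ ((H.neighborFinset x).filter
            (fun y => s(x, y) ∈ P.edges))).card := by
          have := Finset.le_card_sdiff ((H.neighborFinset x).filter
            (fun y => s(x, y) ∈ P.edges)) (H.neighborFinset x)
          omega
        have hne : ((H.neighborFinset x) \ ((H.neighborFinset x).filter
            (fun y => s(x, y) ∈ P.edges))).Nonempty := Finset.card_pos.mp (by omega)
        obtain ⟨y, hy⟩ := hne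
        rw [Finset.mem_sdiff, Finset.mem_filter] at hy
        have hyadj : H.Adj x y := (mem_neighborFinset _ _ _).mp hy.1
        have hynotedge : s(x, y) ∉ P.edges := fun h => hy.2 ⟨hy.1, h⟩
        by_cases hys : y ∈ P.support
        · exfalso
          have htp : (P.takeUntil y hys).IsPath := hp.takeUntil hys
          refine hac y (Walk.cons hyadj.symm (P.takeUntil y hys)) ?_
          rw [Walk.cons_isCycle_iff]
          refine ⟨htp, fun h => hynotedge ?_⟩
          rw [Sym2.eq_swap] at h
          exact P.edges_takeUntil_subset hys h
        · exact ⟨y, r, Walk.cons hyadj.symm P, hp.cons hys, by simp [hlen]⟩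
  obtain ⟨x, r, p, hp, hlen⟩ := key (Fintype.card V)
  have := hp.length_lt
  omega


lemma my_girth_le {V : Type*} {G : SimpleGraph V} {k : ℕ} (hgirth : (k : ℕ∞) ≤ G.girth)
    {a : V} {w : G.Walk a a} (hw : w.IsCycle) : k ≤ w.length := by
  have h1 : G.egirth ≤ (w.length : ℕ∞) := by
    rw [SimpleGraph.egirth]
    exact iInf_le_of_le a <| iInf_le_of_le w <| iInf_le_of_le hw le_rfl
  have hne : G.egirth ≠ ⊤ := by
    intro h
    rw [h, top_le_iff] at h1
    exact (ENat.coe_ne_top _) h1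
  have h2 : (G.girth : ℕ∞) = G.egirth := ENat.coe_toNat hne
  have := hgirth.trans (h2.le.trans h1)
  exact_mod_cast this



lemma my_internal_le {V : Type*} [Fintype V] [DecidableEq V] (H : SimpleGraph V)
    [DecidableRel H.Adj] (R : Finset V) (κ : ℕ) (hR : R.card = κ)
    (hsupp : ∀ ⦃x y : V⦄, H.Adj x y → x ∈ R ∧ y ∈ R)
    (hdeg : ∀ ⦃x y : V⦄, H.Adj x y → 2 ≤ H.degree x)
    (hg : ∀ (a : V) (c : H.Walk a a), c.IsCycle → κ ≤ c.length) :
    H.edgeFinset.card ≤ κ := by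
  rcases Finset.eq_empty_or_nonempty H.edgeFinset with he | ⟨e0, he0⟩
  · simp [he]
  · -- extract an edge
    have hadj0 : ∃ x y : V, H.Adj x y := by
      revert he0
      refine Sym2.inductionOn e0 (fun x y h => ?_)
      exact ⟨x, y, (SimpleGraph.mem_edgeFinset.mp h)⟩
    obtain ⟨x0, y0, h0⟩ := hadj0
    obtain ⟨a, c, hc⟩ := my_exists_cycle H hdeg h0
    -- support tail facts
    have htail_sub : ∀ z ∈ c.support.tail, z ∈ R := by
      intro z hz
      rw [← Walk.map_snd_darts] at hz
      obtain ⟨d, hd, hdz⟩ := List.mem_map.mp hz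
      exact hdz ▸ (hsupp d.adj).2
    have htail_len : c.support.tail.length = c.length := by
      have h1 := c.length_support
      have h2 := congrArg List.length c.support_eq_cons
      simp only [List.length_cons] at h2
      omega
    have htail_nodup : c.support.tail.Nodup := hc.support_nodup
    have hfin_sub : c.support.tail.toFinset ⊆ R := by
      intro z hz
      exact htail_sub z (List.mem_toFinset.mp hz)
    have hcard_fin : c.support.tail.toFinset.card = c.length := by
      rw [List.toFinset_card_of_nodup htail_nodup, htail_len]
    have hlen_le : c.length ≤ κ := by
      rw [← hcard_fin, ← hR]
      exact Finset.card_le_card hfin_sub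
    have hlen_ge : κ ≤ c.length := hg a c hc
    have hlen : c.length = κ := le_antisymm hlen_le hlen_ge
    have hk3 : 3 ≤ κ := hlen ▸ hc.three_le_length
    have hRfin : c.support.tail.toFinset = R :=
      Finset.eq_of_subset_of_card_le hfin_sub (by rw [hcard_fin, hlen, hR])
    have hmemsupp : ∀ z ∈ R, z ∈ c.support := by
      intro z hz
      rw [← hRfin] at hz
      exact List.mem_of_mem_tail (List.mem_toFinset.mp hz)
    -- a helper: a short walk between adjacent vertices avoiding their edge gives a short cycle
    have short : ∀ (p q : V), H.Adj p q → ∀ (w : H.Walk q p),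
        s(p, q) ∉ w.edges → 2 * w.length ≤ κ → False := by
      intro p q hpq w hw h2
      have hbp : w.bypass.IsPath := Walk.bypass_isPath w
      have hbe : s(p, q) ∉ w.bypass.edges := fun h => hw (Walk.edges_bypass_subset w h)
      have hcyc : (Walk.cons hpq w.bypass).IsCycle := by
        rw [Walk.cons_isCycle_iff]
        exact ⟨hbp, hbe⟩
      have := hg p _ hcyc
      have hlb := Walk.length_bypass_le w
      simp only [Walk.length_cons] at this
      omega
    -- every H-edge lies on the cycle c
    have hall : ∀ e ∈ H.edgeFinset, e ∈ c.edges := by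
      intro e he
      by_contra hne
      revert he hne
      refine Sym2.inductionOn e (fun x y he hne => ?_)
      have hxy : H.Adj x y := SimpleGraph.mem_edgeFinset.mp he
      have hx : x ∈ c.support := hmemsupp x (hsupp hxy).1
      set c' := c.rotate x hx with hc'def
      have hc' : c'.IsCycle := hc.rotate hx
      have hedges : ∀ f, f ∈ c'.edges ↔ f ∈ c.edges := fun f => (c.rotate_edges x hx).mem_iff
      have hne' : s(x, y) ∉ c'.edges := fun h => hne ((hedges _).mp h)
      have hy : y ∈ c'.support := by
        have hyt : y ∈ c.support.tail := by
          have : y ∈ c.support.tail.toFinset := hRfin ▸ (hsupp hxy).2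
          exact List.mem_toFinset.mp this
        have := (c.support_rotate x hx).mem_iff.mpr hyt
        exact List.mem_of_mem_tail this
      have hsplit := c'.take_spec hy
      have hlen' : c'.length = κ := by
        rw [← hlen, ← c.length_darts, ← c'.length_darts]
        exact (c.rotate_darts x hx).perm.length_eq
      have hlensum : (c'.takeUntil y hy).length + (c'.dropUntil y hy).length = κ := by
        have := congrArg Walk.length hsplit
        rw [Walk.length_append] at this
        rw [this, hlen']
      have h1 : s(x, y) ∉ (c'.takeUntil y hy).edges :=
        fun h => hne' (c'.edges_takeUntil_subset hy h)
      have h2 : s(x, y) ∉ (c'.dropUntil y hy).edges :=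
        fun h => hne' (c'.edges_dropUntil_subset hy h)
      rcases le_or_gt ((c'.takeUntil y hy).length) ((c'.dropUntil y hy).length) with hle | hlt
      · refine short y x hxy.symm (c'.takeUntil y hy) ?_ (by omega)
        rw [Sym2.eq_swap]; exact h1
      · exact short x y hxy (c'.dropUntil y hy) h2 (by omega)
    -- conclude
    calc H.edgeFinset.card ≤ c.edges.toFinset.card :=
          Finset.card_le_card (fun e he => List.mem_toFinset.mpr (hall e he))
      _ ≤ c.edges.length := c.edges.toFinset_card_le
      _ = c.length := c.length_edges
      _ = κ := hlen
/-- The subgraph of `G` induced (as a graph on `V`) by the range of `v`. -/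
def myRangeGraph {V : Type*} {k : ℕ} (G : SimpleGraph V) (v : Fin k → V) : SimpleGraph V where
  Adj a b := G.Adj a b ∧ (∃ i, v i = a) ∧ (∃ j, v j = b)
  symm := ⟨fun a b ⟨h1, h2, h3⟩ => ⟨h1.symm, h3, h2⟩⟩
  loopless := ⟨fun a ⟨h1, _⟩ => G.irrefl h1⟩

instance myRangeGraph.instDec {V : Type*} [DecidableEq V] {k : ℕ} (G : SimpleGraph V)
    [DecidableRel G.Adj] (v : Fin k → V) : DecidableRel (myRangeGraph G v).Adj :=
  fun a b => inferInstanceAs (Decidable (G.Adj a b ∧ (∃ i, v i = a) ∧ (∃ j, v j = b)))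


/-- In an s-regular graph (s > 2) with girth g, any k ≤ g distinct vertices
are incident to at least k(s−1) distinct edges. -/
theorem high_girth_coverage {V : Type*} [Fintype V] [DecidableEq V]
    (G : SimpleGraph V) [DecidableRel G.Adj]
    (s k : ℕ) (hs : 2 < s) (hreg : G.IsRegularOfDegree s)
    (hgirth : (k : ℕ∞) ≤ G.girth)
    (v : Fin k → V) (hv : Function.Injective v) :
    k * (s - 1) ≤ (G.edgeFinset.filter (fun e => ∃ i, v i ∈ e)).card := by
  induction k with
  | zero => simp
  | succ m ih =>
    set H := myRangeGraph G v with hHdef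
    have hHadj : ∀ {a b : V}, H.Adj a b ↔ (G.Adj a b ∧ (∃ i, v i = a) ∧ (∃ j, v j = b)) :=
      Iff.rfl
    set C := G.edgeFinset.filter (fun e => ∃ i, v i ∈ e) with hCdef
    by_cases hcase : ∀ i, 2 ≤ H.degree (v i)
    · -- every chosen vertex has ≥ 2 neighbours among the chosen ones
      have hHG : H ≤ G := fun a b hab => hab.1
      have hRcard : (Finset.univ.image v).card = m + 1 := by
        rw [Finset.card_image_of_injective _ hv, Finset.card_univ, Fintype.card_fin]
      have hI : H.edgeFinset.card ≤ m + 1 := by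
        refine my_internal_le H (Finset.univ.image v) (m + 1) hRcard ?_ ?_ ?_
        · intro x y hxy
          obtain ⟨⟨i, hi⟩, ⟨j, hj⟩⟩ := hxy.2
          exact ⟨Finset.mem_image.mpr ⟨i, Finset.mem_univ i, hi⟩,
                 Finset.mem_image.mpr ⟨j, Finset.mem_univ j, hj⟩⟩
        · intro x y hxy
          obtain ⟨i, hi⟩ := hxy.2.1
          exact hi ▸ hcase i
        · intro a c hc
          have hcG : (c.mapLe hHG).IsCycle := hc.mapLe _
          have := my_girth_le hgirth hcG
          rwa [Walk.mapLe, Walk.length_map] at this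
      -- double counting
      have hinc : ∀ i : Fin (m + 1), G.incidenceFinset (v i) =
          C.filter (fun e => v i ∈ e) := by
        intro i
        ext e
        rw [mem_incidenceFinset, Finset.mem_filter, hCdef, Finset.mem_filter,
          SimpleGraph.mem_edgeFinset]
        constructor
        · rintro ⟨h1, h2⟩
          exact ⟨⟨h1, i, h2⟩, h2⟩
        · rintro ⟨⟨h1, _⟩, h2⟩
          exact ⟨h1, h2⟩
      have hks : (m + 1) * s = ∑ i : Fin (m + 1), (C.filter (fun e => v i ∈ e)).card := by
        have h1 : ∀ i : Fin (m + 1), (C.filter (fun e => v i ∈ e)).card = s := by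
          intro i
          rw [← hinc i, card_incidenceFinset_eq_degree, hreg (v i)]
        rw [Finset.sum_congr rfl (fun i _ => h1 i)]
        simp [mul_comm]
      have hswap : ∑ i : Fin (m + 1), (C.filter (fun e => v i ∈ e)).card
          = ∑ e ∈ C, (Finset.univ.filter (fun i : Fin (m + 1) => v i ∈ e)).card := by
        simp_rw [Finset.card_filter]
        rw [Finset.sum_comm]
      have hbound : ∀ e ∈ C, (Finset.univ.filter (fun i : Fin (m + 1) => v i ∈ e)).card ≤
          (if e ∈ H.edgeFinset then 2 else 1) := by
        intro e he
        revert he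
        refine Sym2.inductionOn e (fun a b he => ?_)
        have hab : G.Adj a b := by
          rw [hCdef, Finset.mem_filter, SimpleGraph.mem_edgeFinset,
            SimpleGraph.mem_edgeSet] at he
          exact he.1
        have hone : ∀ c : V, (Finset.univ.filter (fun i : Fin (m + 1) => v i = c)).card ≤ 1 := by
          intro c
          refine Finset.card_le_one.mpr (fun j1 h1 j2 h2 => ?_)
          simp only [Finset.mem_filter] at h1 h2
          exact hv (h1.2.trans h2.2.symm)
        by_cases hIe : s(a, b) ∈ H.edgeFinset
        · rw [if_pos hIe]
          have hsub : (Finset.univ.filter (fun i : Fin (m + 1) => v i ∈ s(a, b))) ⊆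
              (Finset.univ.filter (fun i => v i = a)) ∪
              (Finset.univ.filter (fun i => v i = b)) := by
            intro j hj
            simp only [Finset.mem_filter, Finset.mem_univ, true_and, Sym2.mem_iff,
              Finset.mem_union] at *
            tauto
          calc _ ≤ _ := Finset.card_le_card hsub
            _ ≤ _ := Finset.card_union_le _ _
            _ ≤ 2 := by have := hone a; have := hone b; omega
        · rw [if_neg hIe]
          have hemp : (Finset.univ.filter (fun i : Fin (m + 1) => v i = a)) = ∅ ∨
              (Finset.univ.filter (fun i : Fin (m + 1) => v i = b)) = ∅ := by
            by_contra hcon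
            push_neg at hcon
            obtain ⟨j1, hj1⟩ := hcon.1
            obtain ⟨j2, hj2⟩ := hcon.2
            simp only [Finset.mem_filter] at hj1 hj2
            exact hIe (SimpleGraph.mem_edgeFinset.mpr
              (hHadj.mpr ⟨hab, ⟨j1, hj1.2⟩, ⟨j2, hj2.2⟩⟩))
          rcases hemp with h | h
          · refine le_trans (Finset.card_le_card ?_) (hone b)
            intro j hj
            simp only [Finset.mem_filter, Finset.mem_univ, true_and, Sym2.mem_iff] at *
            rcases hj with h' | h'
            · exact absurd (show j ∈ Finset.univ.filter (fun i : Fin (m + 1) => v i = a) from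
                Finset.mem_filter.mpr ⟨Finset.mem_univ j, h'⟩) (by simp [h])
            · exact h'
          · refine le_trans (Finset.card_le_card ?_) (hone a)
            intro j hj
            simp only [Finset.mem_filter, Finset.mem_univ, true_and, Sym2.mem_iff] at *
            rcases hj with h' | h'
            · exact h'
            · exact absurd (show j ∈ Finset.univ.filter (fun i : Fin (m + 1) => v i = b) from
                Finset.mem_filter.mpr ⟨Finset.mem_univ j, h'⟩) (by simp [h])
      have hfinal : (m + 1) * s ≤ C.card + H.edgeFinset.card := by
        rw [hks, hswap]
        calc ∑ e ∈ C, (Finset.univ.filter (fun i : Fin (m + 1) => v i ∈ e)).card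
            ≤ ∑ e ∈ C, (if e ∈ H.edgeFinset then 2 else 1) := Finset.sum_le_sum hbound
          _ = ∑ e ∈ C, (1 + if e ∈ H.edgeFinset then 1 else 0) := by
              refine Finset.sum_congr rfl (fun e _ => ?_)
              split <;> rfl
          _ = C.card + ∑ e ∈ C, (if e ∈ H.edgeFinset then 1 else 0) := by
              rw [Finset.sum_add_distrib, Finset.sum_const, smul_eq_mul, mul_one]
          _ = C.card + (C.filter (fun e => e ∈ H.edgeFinset)).card := by
              congr 1
              exact (Finset.card_filter _ _).symm
          _ ≤ C.card + H.edgeFinset.card := by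
              exact Nat.add_le_add_left
                (Finset.card_le_card (fun e he => (Finset.mem_filter.mp he).2)) _
      have harith : (m + 1) * (s - 1) + (m + 1) = (m + 1) * s := by
        have hs1 : 1 ≤ s := by omega
        calc (m + 1) * (s - 1) + (m + 1) = (m + 1) * ((s - 1) + 1) := by ring
          _ = (m + 1) * s := by rw [Nat.sub_add_cancel hs1]
      omega
    · -- some chosen vertex has ≤ 1 neighbours among the chosen ones : induction
      push_neg at hcase
      obtain ⟨i, hdegi'⟩ := hcase
      have hdegi : H.degree (v i) ≤ 1 := by omega
      set v' : Fin m → V := v ∘ i.succAbove with hv'def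
      have hv' : Function.Injective v' := hv.comp (Fin.succAbove_right_injective)
      have hg' : (m : ℕ∞) ≤ G.girth :=
        le_trans (by exact_mod_cast Nat.cast_le.mpr (Nat.le_succ m)) hgirth
      have IH := ih hg' v' hv'
      set C' := G.edgeFinset.filter (fun e => ∃ j, v' j ∈ e) with hC'def
      set D := (G.incidenceFinset (v i)).filter (fun e => ¬ ∃ j : Fin m, v' j ∈ e) with hDdef
      set Bad := (G.incidenceFinset (v i)).filter (fun e => ∃ j : Fin m, v' j ∈ e) with hBaddef
      have hBD : Bad.card + D.card = s := by
        rw [hBaddef, hDdef, Finset.card_filter_add_card_filter_not,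
          card_incidenceFinset_eq_degree, hreg]
      have hBadsub : Bad ⊆ (H.neighborFinset (v i)).image (fun z => s(v i, z)) := by
        intro e he
        rw [hBaddef, Finset.mem_filter, mem_incidenceFinset] at he
        obtain ⟨⟨hedge, hvi⟩, j, hj⟩ := he
        have hne : v' j ≠ v i := fun h => Fin.succAbove_ne i j (hv h)
        have he' : e = s(v i, v' j) := by
          revert hedge hvi hj
          refine Sym2.inductionOn e (fun a b hedge hvi hj => ?_)
          rw [Sym2.mem_iff] at hvi hj
          rcases hvi with h1 | h1 <;> rcases hj with h2 | h2
          · exact absurd (h2.trans h1.symm) hne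
          · rw [h1, h2]
          · rw [h1, h2, Sym2.eq_swap]
          · exact absurd (h2.trans h1.symm) hne
        have hadj' : H.Adj (v i) (v' j) := by
          refine hHadj.mpr ⟨?_, ⟨i, rfl⟩, ⟨i.succAbove j, rfl⟩⟩
          rw [← SimpleGraph.mem_edgeSet, ← he']
          exact hedge
        exact Finset.mem_image.mpr ⟨v' j, (mem_neighborFinset _ _ _).mpr hadj', he'.symm⟩
      have hBadcard : Bad.card ≤ 1 := by
        refine le_trans (Finset.card_le_card hBadsub) (le_trans Finset.card_image_le ?_)
        rw [card_neighborFinset_eq_degree]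
        exact hdegi
      have hD : s - 1 ≤ D.card := by omega
      have hDC : D ⊆ C := by
        intro e he
        rw [hDdef, Finset.mem_filter, mem_incidenceFinset] at he
        exact Finset.mem_filter.mpr ⟨SimpleGraph.mem_edgeFinset.mpr he.1.1, ⟨i, he.1.2⟩⟩
      have hC'C : C' ⊆ C := by
        intro e he
        rw [hC'def, Finset.mem_filter] at he
        obtain ⟨j, hj⟩ := he.2
        exact Finset.mem_filter.mpr ⟨he.1, ⟨i.succAbove j, hj⟩⟩
      have hdisj : Disjoint C' D := by
        rw [Finset.disjoint_left]
        intro e he1 he2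
        rw [hC'def, Finset.mem_filter] at he1
        rw [hDdef, Finset.mem_filter] at he2
        exact he2.2 he1.2
      calc (m + 1) * (s - 1) = m * (s - 1) + (s - 1) := by ring
        _ ≤ C'.card + D.card := add_le_add IH hD
        _ = (C' ∪ D).card := (Finset.card_union_of_disjoint hdisj).symm
        _ ≤ C.card := Finset.card_le_card (Finset.union_subset hC'C hDC)
end

section
/- Let s > 2 and k = as + b with integers a ≥ 0, s > b ≥ a+1. Then ⌈k(s−1)/s⌉ + ⌈k(s−1)/s²⌉ = k + 1. -/
/-- For s > 2 and k = as + b with s > b ≥ a + 1: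
⌈k(s−1)/s⌉ + ⌈k(s−1)/s²⌉ = k + 1. -/
theorem ceiling_identity (s a b k : ℕ) (hs : 2 < s) (hk : k = a * s + b)
    (hbs : b < s) (hab : a + 1 ≤ b) :
    ⌈((k * (s - 1) : ℕ) : ℚ) / (s : ℚ)⌉ + ⌈((k * (s - 1) : ℕ) : ℚ) / (s : ℚ) ^ 2⌉
      = (k : ℤ) + 1 := by
  have hs1 : 1 ≤ s := by omega
  have hsq : (0:ℚ) < (s:ℚ) := by exact_mod_cast by omega
  have hsq2 : (0:ℚ) < (s:ℚ)^2 := by positivity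
  have hcast : ((k * (s - 1) : ℕ) : ℚ) = (k:ℚ) * ((s:ℚ) - 1) := by
    push_cast [Nat.cast_sub hs1]; ring
  have hkq : (k:ℚ) = (a:ℚ) * s + b := by exact_mod_cast congrArg (Nat.cast : ℕ → ℚ) hk
  have hbsq : (b:ℚ) < s := by exact_mod_cast hbs
  have habq : (a:ℚ) + 1 ≤ b := by exact_mod_cast hab
  have hsq3 : (3:ℚ) ≤ s := by exact_mod_cast hs
  have h1 : ⌈((k * (s - 1) : ℕ) : ℚ) / (s : ℚ)⌉ = (k:ℤ) - a := by
    rw [Int.ceil_eq_iff]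
    constructor
    · rw [lt_div_iff₀ hsq, hcast]
      push_cast
      nlinarith
    · rw [div_le_iff₀ hsq, hcast]
      push_cast
      nlinarith
  have h2 : ⌈((k * (s - 1) : ℕ) : ℚ) / (s : ℚ)^2⌉ = (a:ℤ) + 1 := by
    rw [Int.ceil_eq_iff]
    constructor
    · rw [lt_div_iff₀ hsq2, hcast]
      push_cast
      nlinarith
    · rw [div_le_iff₀ hsq2, hcast]
      push_cast
      nlinarith
  rw [h1, h2]; ring
end

section
/- Corradi's lemma: let A₁,…,A_N be finite sets each of size α such that |Aᵢ ∩ Aⱼ| ≤ β for all i ≠ j. Then |A₁ ∪ ⋯ ∪ A_N| ≥ N α² / (α + (N−1)β). -/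
/-- Corradi's lemma: N sets of size α with pairwise intersections of size
at most β have union of size at least Nα²/(α + (N−1)β). -/
theorem corradi_lemma {X : Type*} [DecidableEq X]
    (N α β : ℕ) (hN : 1 ≤ N) (hα : 1 ≤ α)
    (A : Fin N → Finset X)
    (hsize : ∀ i, (A i).card = α)
    (hint : ∀ i j, i ≠ j → (A i ∩ A j).card ≤ β) :
    (N * α ^ 2 : ℚ) / (α + (N - 1 : ℕ) * β)
      ≤ ((Finset.univ.biUnion A).card : ℚ) := by
  classical
  set U := Finset.univ.biUnion A with hU
  set d : X → ℕ := fun x => (Finset.univ.filter (fun i => x ∈ A i)).card with hd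
  have hsub : ∀ i, A i ⊆ U := fun i => Finset.subset_biUnion_of_mem A (Finset.mem_univ i)
  have hdite : ∀ x, d x = ∑ i : Fin N, if x ∈ A i then 1 else 0 := by
    intro x
    show (Finset.univ.filter (fun i => x ∈ A i)).card = _
    exact Finset.card_filter _ _
  have hfilt : ∀ i, U.filter (· ∈ A i) = A i := by
    intro i
    rw [Finset.filter_mem_eq_inter, Finset.inter_eq_right.mpr (hsub i)]
  have hdsum : ∑ x ∈ U, d x = N * α := by
    calc ∑ x ∈ U, d x = ∑ x ∈ U, ∑ i : Fin N, if x ∈ A i then 1 else 0 := by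
          exact Finset.sum_congr rfl fun x _ => hdite x
      _ = ∑ i : Fin N, ∑ x ∈ U, if x ∈ A i then 1 else 0 := Finset.sum_comm
      _ = ∑ i : Fin N, (A i).card := by
          refine Finset.sum_congr rfl fun i _ => ?_
          rw [← Finset.card_filter, hfilt]
      _ = N * α := by simp [hsize]
  have hdsq : ∑ x ∈ U, d x ^ 2 ≤ N * (α + (N - 1) * β) := by
    have h1 : ∑ x ∈ U, d x ^ 2 = ∑ i : Fin N, ∑ j : Fin N, (A i ∩ A j).card := by
      have hx : ∀ x, d x ^ 2 = ∑ i : Fin N, ∑ j : Fin N,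
          if x ∈ A i ∧ x ∈ A j then 1 else 0 := by
        intro x
        rw [sq, hdite x, Finset.sum_mul_sum]
        refine Finset.sum_congr rfl fun i _ => Finset.sum_congr rfl fun j _ => ?_
        by_cases h1 : x ∈ A i <;> by_cases h2 : x ∈ A j <;> simp [h1, h2]
      calc ∑ x ∈ U, d x ^ 2
          = ∑ x ∈ U, ∑ i : Fin N, ∑ j : Fin N, if x ∈ A i ∧ x ∈ A j then 1 else 0 :=
            Finset.sum_congr rfl fun x _ => hx x
        _ = ∑ i : Fin N, ∑ j : Fin N, ∑ x ∈ U, if x ∈ A i ∧ x ∈ A j then 1 else 0 := by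
            rw [Finset.sum_comm]
            exact Finset.sum_congr rfl fun i _ => Finset.sum_comm
        _ = ∑ i : Fin N, ∑ j : Fin N, (A i ∩ A j).card := by
            refine Finset.sum_congr rfl fun i _ => Finset.sum_congr rfl fun j _ => ?_
            rw [← Finset.card_filter]
            congr 1
            ext x
            simp only [Finset.mem_filter, Finset.mem_inter]
            exact ⟨fun h => h.2, fun h => ⟨hsub i h.1, h⟩⟩
    rw [h1]
    have hrow : ∀ i : Fin N, ∑ j : Fin N, (A i ∩ A j).card ≤ α + (N - 1) * β := by
      intro i
      rw [← Finset.sum_erase_add _ _ (Finset.mem_univ i)]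
      have h2 : (A i ∩ A i).card = α := by rw [Finset.inter_self, hsize]
      have h3 : ∑ j ∈ Finset.univ.erase i, (A i ∩ A j).card ≤ (N - 1) * β := by
        calc ∑ j ∈ Finset.univ.erase i, (A i ∩ A j).card
            ≤ ∑ _j ∈ Finset.univ.erase i, β := by
              refine Finset.sum_le_sum fun j hj => hint i j ?_
              exact fun h => (Finset.mem_erase.mp hj).1 h.symm
          _ = (N - 1) * β := by
              rw [Finset.sum_const, smul_eq_mul, Finset.card_erase_of_mem (Finset.mem_univ i),
                Finset.card_univ, Fintype.card_fin]
        
      omega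
    calc ∑ i : Fin N, ∑ j : Fin N, (A i ∩ A j).card
        ≤ ∑ _i : Fin N, (α + (N - 1) * β) := Finset.sum_le_sum fun i _ => hrow i
      _ = N * (α + (N - 1) * β) := by simp [mul_comm]
  -- Cauchy–Schwarz
  have hcs : ((∑ x ∈ U, d x : ℕ) : ℚ) ^ 2 ≤ (U.card : ℚ) * ((∑ x ∈ U, d x ^ 2 : ℕ) : ℚ) := by
    push_cast
    exact sq_sum_le_card_mul_sum_sq
  rw [hdsum] at hcs
  have hkey : ((N * α : ℕ) : ℚ) ^ 2 ≤ (U.card : ℚ) * ((N * (α + (N - 1) * β) : ℕ) : ℚ) := by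
    refine hcs.trans ?_
    have := Nat.cast_le (α := ℚ).mpr hdsq
    nlinarith [Nat.cast_nonneg (α := ℚ) U.card]
  have hD : (0 : ℚ) < (α : ℚ) + ((N - 1 : ℕ) : ℚ) * β := by
    have : (1 : ℚ) ≤ (α : ℚ) := by exact_mod_cast hα
    positivity
  rw [div_le_iff₀ hD]
  have hNpos : (0 : ℚ) < (N : ℚ) := by exact_mod_cast hN
  have hexp : ((N * (α + (N - 1) * β) : ℕ) : ℚ)
      = (N : ℚ) * ((α : ℚ) + ((N - 1 : ℕ) : ℚ) * β) := by push_cast; ring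
  rw [hexp] at hkey
  push_cast at hkey ⊢
  nlinarith [Nat.cast_nonneg (α := ℚ) U.card]
end
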